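/- If p is a polynomial with real coefficients whose roots are all negative real numbers and whose leading coefficient is positive, then p(n) > 0 for all n ∈ ℤ₊ and the sequence (1/p(n))_{n≥0} is a Hausdorff moment sequence, i.e., there is a positive Borel measure μ on [0,1] with 1/p(n) = ∫ x^n dμ(x) for all n. -/

import Mathlib

/-!
Over `ℂ` the polynomial splits, and since its roots are the negative reals `-aᵢ`, it factors over `ℝ`
as `p(x) = c ∏ (x + aᵢ)` with `c > 0` and `aᵢ > 0`. Each factor `1 / (n + a)` is the `n`-th moment of
`x^(a-1) dx` on `[0,1]`, and Hausdorff moment sequences are closed under termwise products (push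
the product measure forward along `(x, y) ↦ x y`) and under multiplication by `c⁻¹ ≥ 0`.
-/
open MeasureTheory Polynomial Set

def IsHausdorffMomentSeq (a : ℕ → ℝ) : Prop :=
  ∃ μ : Measure ℝ, IsFiniteMeasure μ ∧ μ (Icc (0 : ℝ) 1)ᶜ = 0 ∧
    ∀ n : ℕ, a n = ∫ x in Icc (0 : ℝ) 1, x ^ n ∂μ

namespace IsHausdorffMomentSeq

-- `1 / (n + a) = ∫₀¹ xⁿ x^(a-1) dx`
theorem one_div_add {a : ℝ} (ha : 0 < a) : IsHausdorffMomentSeq fun n => 1 / (n + a) := by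
  have hint : IntegrableOn (fun x : ℝ => x ^ (a - 1)) (Ioc 0 1) :=
    (intervalIntegral.intervalIntegrable_rpow' (by linarith)).1
  set ν := (volume.restrict (Ioc (0 : ℝ) 1)).withDensity fun x => ENNReal.ofReal (x ^ (a - 1))
  refine ⟨ν, isFiniteMeasure_withDensity_ofReal hint.2, ?_, fun n => ?_⟩
  · refine withDensity_absolutelyContinuous _ _ ?_
    rw [Measure.restrict_apply' measurableSet_Ioc,
      (disjoint_compl_left_iff_subset.2 Ioc_subset_Icc_self).inter_eq, measure_empty]
  · have hmeas : Measurable fun x : ℝ => ENNReal.ofReal (x ^ (a - 1)) := by fun_prop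
    rw [setIntegral_withDensity_eq_setIntegral_toReal_smul hmeas
      (ae_of_all _ fun _ => ENNReal.ofReal_lt_top) _ measurableSet_Icc,
      Measure.restrict_restrict measurableSet_Icc, inter_eq_right.2 Ioc_subset_Icc_self]
    have hpow : ∀ x ∈ Ioc (0 : ℝ) 1,
        (ENNReal.ofReal (x ^ (a - 1))).toReal • x ^ n = x ^ ((n : ℝ) + a - 1) := by
      intro x hx
      rw [ENNReal.toReal_ofReal (Real.rpow_nonneg hx.1.le _), smul_eq_mul, ← Real.rpow_natCast,
        ← Real.rpow_add hx.1]
      ring_nf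
    have hna : 0 < (n : ℝ) + a := by positivity
    rw [setIntegral_congr_fun measurableSet_Ioc hpow, ← intervalIntegral.integral_of_le zero_le_one,
      integral_rpow (Or.inl (by linarith)), sub_add_cancel, Real.one_rpow,
      Real.zero_rpow hna.ne']
    simp

theorem const {c : ℝ} (hc : 0 ≤ c) : IsHausdorffMomentSeq fun _ => c := by
  refine ⟨ENNReal.ofReal c • Measure.dirac 1, Measure.smul_finite _ ENNReal.ofReal_ne_top, ?_,
    fun n => ?_⟩
  · simp [Measure.dirac_apply' _ measurableSet_Icc.compl]
  · rw [Measure.restrict_smul, integral_smul_measure, setIntegral_dirac _ 1 (Icc 0 1)]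
    simp [ENNReal.toReal_ofReal hc]

theorem mul {a b : ℕ → ℝ} (ha : IsHausdorffMomentSeq a) (hb : IsHausdorffMomentSeq b) :
    IsHausdorffMomentSeq fun n => a n * b n := by
  obtain ⟨μ, hμ, hμI, hμa⟩ := ha
  obtain ⟨ν, hν, hνI, hνb⟩ := hb
  replace hμI : ∀ᵐ x ∂μ, x ∈ Icc (0 : ℝ) 1 := mem_ae_iff.2 hμI
  replace hνI : ∀ᵐ x ∂ν, x ∈ Icc (0 : ℝ) 1 := mem_ae_iff.2 hνI
  set f : ℝ × ℝ → ℝ := fun q => q.1 * q.2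
  have hf : Measurable f := measurable_fst.mul measurable_snd
  have hI : ∀ᵐ x ∂(μ.prod ν).map f, x ∈ Icc (0 : ℝ) 1 := by
    refine (ae_map_iff hf.aemeasurable measurableSet_Icc).2 ?_
    filter_upwards [Measure.quasiMeasurePreserving_fst.ae hμI,
      Measure.quasiMeasurePreserving_snd.ae hνI] with q h1 h2
    exact ⟨mul_nonneg h1.1 h2.1, mul_le_one₀ h1.2 h2.1 h2.2⟩
  refine ⟨(μ.prod ν).map f, inferInstance, mem_ae_iff.1 hI, fun n => ?_⟩
  dsimp only
  rw [hμa, hνb, Measure.restrict_eq_self_of_ae_mem hI, integral_map hf.aemeasurable (by fun_prop),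
    Measure.restrict_eq_self_of_ae_mem hμI, Measure.restrict_eq_self_of_ae_mem hνI]
  simp only [f, mul_pow]
  exact (integral_prod_mul (fun x : ℝ => x ^ n) (fun x : ℝ => x ^ n)).symm

theorem multiset_prod {ι : Type*} (s : Multiset ι) {a : ι → ℕ → ℝ}
    (ha : ∀ i ∈ s, IsHausdorffMomentSeq (a i)) :
    IsHausdorffMomentSeq fun n => (s.map fun i => a i n).prod := by
  induction s using Multiset.induction_on with
  | empty => simpa using const zero_le_one
  | cons i s ih =>
    simp only [Multiset.map_cons, Multiset.prod_cons]
    exact (ha i (Multiset.mem_cons_self i s)).mul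
      (ih fun j hj => ha j (Multiset.mem_cons_of_mem hj))

end IsHausdorffMomentSeq

theorem Polynomial.exists_eq_C_leadingCoeff_mul_prod_X_add_C_of_roots_neg (p : ℝ[X])
    (hroots : ∀ z : ℂ, aeval z p = 0 → ∃ r : ℝ, r < 0 ∧ z = (r : ℂ)) :
    ∃ N : Multiset ℝ, (∀ a ∈ N, 0 < a) ∧ p = C p.leadingCoeff * (N.map fun a => X + C a).prod := by
  set q := p.map (algebraMap ℝ ℂ)
  have hreal : ∀ z ∈ q.roots, ∃ r : ℝ, r < 0 ∧ z = (r : ℂ) := fun z hz =>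
    hroots z (by simpa [q, aeval_def, eval_map] using (mem_roots'.1 hz).2)
  refine ⟨q.roots.map fun z => -z.re, ?_, ?_⟩
  · simp only [Multiset.mem_map, forall_exists_index, and_imp, forall_apply_eq_imp_iff₂]
    intro z hz
    obtain ⟨r, hr, rfl⟩ := hreal z hz
    simpa using hr
  · apply map_injective (algebraMap ℝ ℂ) Complex.ofReal_injective
    change q = _
    conv_lhs => rw [(IsAlgClosed.splits q).eq_prod_roots]
    rw [Polynomial.map_mul, map_C, leadingCoeff_map, Polynomial.map_multiset_prod,
      Multiset.map_map, Multiset.map_map]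
    congr 2
    refine Multiset.map_congr rfl fun z hz => ?_
    obtain ⟨r, -, rfl⟩ := hreal z hz
    simp [sub_eq_add_neg]

theorem stmt_8 (p : Polynomial ℝ) (hlead : 0 < p.leadingCoeff)
    (hroots : ∀ z : ℂ, Polynomial.aeval z p = 0 → ∃ r : ℝ, r < 0 ∧ z = (r : ℂ)) :
    (∀ n : ℕ, 0 < p.eval (n : ℝ)) ∧
    ∃ μ : Measure ℝ, IsFiniteMeasure μ ∧ μ (Set.Icc (0 : ℝ) 1)ᶜ = 0 ∧
      ∀ n : ℕ, 1 / p.eval (n : ℝ) = ∫ x in Set.Icc (0 : ℝ) 1, x ^ n ∂μ := by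
  obtain ⟨N, hN, hp⟩ := p.exists_eq_C_leadingCoeff_mul_prod_X_add_C_of_roots_neg hroots
  have heval (x : ℝ) : p.eval x = p.leadingCoeff * (N.map fun a => x + a).prod := by
    conv_lhs => rw [hp]
    simp [eval_multiset_prod, Multiset.map_map]
  have hfactor_pos (n : ℕ) : ∀ y ∈ N.map fun a => (n : ℝ) + a, 0 < y := by
    simp only [Multiset.mem_map, forall_exists_index, and_imp, forall_apply_eq_imp_iff₂]
    exact fun a ha => by positivity [hN a ha]
  suffices h : IsHausdorffMomentSeq fun n => 1 / p.eval (n : ℝ) from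
    ⟨fun n => heval n ▸ mul_pos hlead (Multiset.prod_pos (hfactor_pos n)), h⟩
  have hmoment := (IsHausdorffMomentSeq.const (inv_nonneg.2 hlead.le)).mul
    (IsHausdorffMomentSeq.multiset_prod N fun a ha => IsHausdorffMomentSeq.one_div_add (hN a ha))
  convert hmoment using 2 with n
  simp only [heval, one_div, mul_inv, Multiset.prod_map_inv]
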